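/- Let (Ω,𝓕,ℙ) be a probability space, d ∈ ℕ, X := L²(Ω;ℝ^d), P a nonempty set, and Φ : [0,∞) × X × P → X a map such that for every bounded set D ⊆ X, sup{‖Φ(t,x,p)‖ : t ≥ 0, x ∈ D, p ∈ P} < ∞. Assume moreover there exists R* > 0 such that for every bounded D ⊆ X there exists T_D ≥ 0 with ‖Φ(t,x,p)‖ ≤ R* for all t ≥ T_D, x ∈ D, p ∈ P. For a bounded set D ⊆ X define ω_P(D) := {y ∈ X : there exist sequences tₙ → ∞, xₙ ∈ D, pₙ ∈ P with Φ(tₙ,xₙ,pₙ) → y weakly in X}, and define Ω* as the closure in the weak topology of X of the union of ω_P(D) over all bounded D ⊆ X. Then: (i) Ω* is bounded in X, with ‖y‖ ≤ R* for all y ∈ Ω*; (ii) Ω* is compact in the weak topology of X; (iii) Ω* attracts every bounded set D in the weak topology, in the sense that for all sequences tₙ → ∞, xₙ ∈ D, pₙ ∈ P, the sequence Φ(tₙ,xₙ,pₙ) has a subsequence converging weakly in X to an element of Ω*; and (iv) Ω* is minimal with this property: every weakly closed set C ⊆ X such that, for every bounded D ⊆ X and all sequences tₙ → ∞, xₙ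 ∈ D, pₙ ∈ P, the sequence Φ(tₙ,xₙ,pₙ) has a subsequence converging weakly to an element of C, satisfies Ω* ⊆ C. -/

import Mathlib

open MeasureTheory Filter Topology Bornology

/-- The state space `X = L²(Ω; ℝ^d)`. -/
noncomputable abbrev L2Space (Ω : Type*) [MeasurableSpace Ω] (ℙ : Measure Ω) (d : ℕ) :=
  Lp (α := Ω) (EuclideanSpace ℝ (Fin d)) 2 ℙ

/-- Weak convergence of a sequence in a normed real vector space. -/
def WeakTendsto {E : Type*} [NormedAddCommGroup E] [NormedSpace ℝ E]
    (x : ℕ → E) (l : E) : Prop :=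
  Filter.Tendsto (fun n => toWeakSpace ℝ E (x n)) Filter.atTop (nhds (toWeakSpace ℝ E l))

/-- The closure of a set in the weak topology. -/
noncomputable def weakClosure {E : Type*} [NormedAddCommGroup E] [NormedSpace ℝ E]
    (s : Set E) : Set E :=
  toWeakSpace ℝ E ⁻¹' closure (toWeakSpace ℝ E '' s)

/-- A set that is closed in the weak topology. -/
def IsWeaklyClosed {E : Type*} [NormedAddCommGroup E] [NormedSpace ℝ E] (s : Set E) : Prop :=
  IsClosed (toWeakSpace ℝ E '' s)

open InnerProductSpace

section WeakHelpers

variable {H : Type*} [NormedAddCommGroup H] [InnerProductSpace ℝ H] [CompleteSpace H]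

lemma flip_topDualPairing_injective :
    Function.Injective ((topDualPairing ℝ H).flip) := by
  intro x y h
  have h1 := LinearMap.congr_fun h (toDual ℝ H (x - y))
  simp only [LinearMap.flip_apply, topDualPairing_apply, toDual_apply_apply] at h1
  have h2 : (inner ℝ (x - y) (x - y) : ℝ) = 0 := by
    rw [inner_sub_right, h1, sub_self]
  rw [inner_self_eq_zero, sub_eq_zero] at h2
  exact h2

lemma weakTendsto_iff {u : ℕ → H} {l : H} :
    WeakTendsto u l ↔ ∀ f : H →L[ℝ] ℝ, Tendsto (fun n => f (u n)) atTop (𝓝 (f l)) := by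
  unfold WeakTendsto
  refine (WeakBilin.tendsto_iff_forall_eval_tendsto (B := (topDualPairing ℝ H).flip)
    (f := fun n => toWeakSpace ℝ H (u n)) (x := toWeakSpace ℝ H l) flip_topDualPairing_injective).trans ?_
  rfl

lemma weakSpace_t2 : T2Space (WeakSpace ℝ H) :=
  (WeakBilin.isEmbedding flip_topDualPairing_injective).t2Space

/-- Weak lower semicontinuity of the norm (eventual bound version). -/
lemma norm_le_of_weakTendsto {u : ℕ → H} {l : H} {R : ℝ} (hR : 0 ≤ R)
    (h : WeakTendsto u l) (hb : ∀ᶠ n in atTop, ‖u n‖ ≤ R) : ‖l‖ ≤ R := by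
  rcases eq_or_ne l 0 with rfl | hl
  · simpa
  have h1 := (weakTendsto_iff.mp h) (toDual ℝ H l)
  simp only [toDual_apply_apply] at h1
  have h2 : (inner ℝ l l : ℝ) ≤ R * ‖l‖ := by
    refine le_of_tendsto h1 ?_
    filter_upwards [hb] with n hn
    calc (inner ℝ l (u n) : ℝ) ≤ ‖l‖ * ‖u n‖ := real_inner_le_norm _ _
      _ ≤ ‖l‖ * R := mul_le_mul_of_nonneg_left hn (norm_nonneg l)
      _ = R * ‖l‖ := mul_comm _ _
  rw [real_inner_self_eq_norm_mul_norm] at h2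
  have hl' : 0 < ‖l‖ := norm_pos_iff.mpr hl
  nlinarith

/-- Weak sequential compactness of bounded sequences in a Hilbert space. -/
lemma exists_weak_subseq {u : ℕ → H} {R : ℝ} (hu : ∀ n, ‖u n‖ ≤ R) :
    ∃ φ : ℕ → ℕ, StrictMono φ ∧ ∃ y : H, WeakTendsto (fun n => u (φ n)) y := by
  have hR0 : 0 ≤ R := le_trans (norm_nonneg (u 0)) (hu 0)
  -- Step 1: diagonal extraction using compactness of a product of intervals
  set g : ℕ → (ℕ → ℝ) := fun n m => inner ℝ (u n) (u m) with hg
  have hgmem : ∀ n, g n ∈ Set.univ.pi (fun _ : ℕ => Set.Icc (-(R * R)) (R * R)) := by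
    intro n m _
    have h1 : |(inner ℝ (u n) (u m) : ℝ)| ≤ R * R := by
      refine le_trans (abs_real_inner_le_norm _ _) ?_
      have := hu n; have := hu m
      nlinarith [norm_nonneg (u n), norm_nonneg (u m)]
    exact abs_le.mp h1
  have hcomp : IsCompact (Set.univ.pi fun _ : ℕ => Set.Icc (-(R * R)) (R * R)) :=
    isCompact_univ_pi fun _ => isCompact_Icc
  obtain ⟨a, -, φ, hφ, hconv⟩ := hcomp.tendsto_subseq hgmem
  rw [tendsto_pi_nhds] at hconv
  -- Step 2: convergence on the closed span
  set K : Submodule ℝ H := (Submodule.span ℝ (Set.range u)).topologicalClosure with hK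
  haveI : CompleteSpace K := (Submodule.isClosed_topologicalClosure _).completeSpace_coe
  set Conv : H → Prop :=
    fun x => ∃ L : ℝ, Tendsto (fun n => (inner ℝ (u (φ n)) x : ℝ)) atTop (𝓝 L) with hConv
  have hconv_span : ∀ x ∈ Submodule.span ℝ (Set.range u), Conv x := by
    intro x hx
    induction hx using Submodule.span_induction with
    | mem x hx =>
      obtain ⟨m, rfl⟩ := hx
      exact ⟨a m, hconv m⟩
    | zero => exact ⟨0, by simpa using (tendsto_const_nhds : Tendsto (fun _ : ℕ => (0:ℝ)) atTop _)⟩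
    | add x y _ _ hx hy =>
      obtain ⟨Lx, hLx⟩ := hx; obtain ⟨Ly, hLy⟩ := hy
      exact ⟨Lx + Ly, by simpa [inner_add_right] using hLx.add hLy⟩
    | smul c x _ hx =>
      obtain ⟨Lx, hLx⟩ := hx
      exact ⟨c * Lx, by simpa [real_inner_smul_right] using hLx.const_mul c⟩
  have hconv_K : ∀ x ∈ K, Conv x := by
    intro x hx
    have hc : CauchySeq (fun n => (inner ℝ (u (φ n)) x : ℝ)) := by
      rw [Metric.cauchySeq_iff]
      intro ε hε
      have hden : (0:ℝ) < 4 * R + 2 := by linarith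
      have hε4 : 0 < ε / (4 * R + 2) := by positivity
      obtain ⟨y, hy, hxy⟩ : ∃ y ∈ Submodule.span ℝ (Set.range u), ‖x - y‖ < ε / (4 * R + 2) := by
        have hx' : x ∈ closure ((Submodule.span ℝ (Set.range u) : Submodule ℝ H) : Set H) := hx
        rw [Metric.mem_closure_iff] at hx'
        obtain ⟨y, hy, hxy⟩ := hx' _ hε4
        exact ⟨y, hy, by rwa [dist_eq_norm] at hxy⟩
      obtain ⟨L, hL⟩ := hconv_span y hy
      have hcauchy := hL.cauchySeq
      rw [Metric.cauchySeq_iff] at hcauchy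
      obtain ⟨N, hN⟩ := hcauchy (ε / 2) (by positivity)
      refine ⟨N, fun m hm n hn => ?_⟩
      have hbound : ∀ k, |(inner ℝ (u k) x : ℝ) - inner ℝ (u k) y| ≤ R * (ε / (4 * R + 2)) := by
        intro k
        rw [← inner_sub_right]
        exact le_trans (abs_real_inner_le_norm _ _)
          (mul_le_mul (hu k) hxy.le (norm_nonneg _) hR0)
      have h1 := hbound (φ m); have h2 := hbound (φ n)
      have h3 := hN m hm n hn
      rw [Real.dist_eq] at h3 ⊢
      have htri : |(inner ℝ (u (φ m)) x : ℝ) - inner ℝ (u (φ n)) x| ≤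
          |(inner ℝ (u (φ m)) x : ℝ) - inner ℝ (u (φ m)) y| +
          |(inner ℝ (u (φ m)) y : ℝ) - inner ℝ (u (φ n)) y| +
          |(inner ℝ (u (φ n)) y : ℝ) - inner ℝ (u (φ n)) x| := by
        have := abs_sub_le ((inner ℝ (u (φ m)) x : ℝ)) ((inner ℝ (u (φ m)) y : ℝ))
          ((inner ℝ (u (φ n)) x : ℝ))
        have := abs_sub_le ((inner ℝ (u (φ m)) y : ℝ)) ((inner ℝ (u (φ n)) y : ℝ))
          ((inner ℝ (u (φ n)) x : ℝ))
        linarith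
      have h4 : |(inner ℝ (u (φ n)) y : ℝ) - inner ℝ (u (φ n)) x|
          = |(inner ℝ (u (φ n)) x : ℝ) - inner ℝ (u (φ n)) y| := abs_sub_comm _ _
      have hRd : R * (ε / (4 * R + 2)) ≤ ε / 4 := by
        rw [mul_div_assoc', div_le_div_iff₀ hden (by norm_num : (0:ℝ) < 4)]
        nlinarith
      linarith [htri, h4 ▸ h2]
    exact cauchySeq_tendsto_of_complete hc
  have humem : ∀ k, u k ∈ K := fun k =>
    Submodule.le_topologicalClosure _ (Submodule.subset_span ⟨k, rfl⟩)
  have hconv_all : ∀ x : H, Conv x := by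
    intro x
    obtain ⟨L, hL⟩ := hconv_K ((K.orthogonalProjectionOnto x : H)) (K.orthogonalProjectionOnto x).2
    refine ⟨L, ?_⟩
    have heq : ∀ k, (inner ℝ (u k) x : ℝ) = inner ℝ (u k) ((K.orthogonalProjectionOnto x : H)) := by
      intro k
      have h0 : (inner ℝ (x - (K.orthogonalProjectionOnto x : H)) (u k) : ℝ) = 0 :=
        K.starProjection_inner_eq_zero x (u k) (humem k)
      have h0' : (inner ℝ (u k) (x - (K.orthogonalProjectionOnto x : H)) : ℝ) = 0 := by
        rw [real_inner_comm]; exact h0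
      rw [inner_sub_right] at h0'
      linarith
    simpa only [heq] using hL
  choose F hF using hconv_all
  have Fadd : ∀ x y, F (x + y) = F x + F y := fun x y =>
    tendsto_nhds_unique (hF (x + y)) (by simpa [inner_add_right] using (hF x).add (hF y))
  have Fsmul : ∀ (c : ℝ) x, F (c • x) = c * F x := fun c x =>
    tendsto_nhds_unique (hF (c • x)) (by simpa [real_inner_smul_right] using (hF x).const_mul c)
  have Fbound : ∀ x, |F x| ≤ R * ‖x‖ := fun x => by
    refine le_of_tendsto (hF x).abs (Eventually.of_forall fun n => ?_)
    exact le_trans (abs_real_inner_le_norm _ _)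
      (mul_le_mul_of_nonneg_right (hu _) (norm_nonneg x))
  let Flin : H →ₗ[ℝ] ℝ :=
    { toFun := F, map_add' := Fadd, map_smul' := fun c x => by simpa using Fsmul c x }
  let Fc : H →L[ℝ] ℝ := Flin.mkContinuous R (fun x => by
    simpa [Flin, Real.norm_eq_abs] using Fbound x)
  refine ⟨φ, hφ, (toDual ℝ H).symm Fc, ?_⟩
  rw [weakTendsto_iff]
  intro f
  set z := (toDual ℝ H).symm f with hz
  have hfz : ∀ v, f v = (inner ℝ z v : ℝ) := fun v => by
    rw [hz, ← toDual_apply_apply]; simp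
  have hfun : (fun n => f (u (φ n))) = fun n => (inner ℝ (u (φ n)) z : ℝ) :=
    funext fun n => (hfz _).trans (real_inner_comm _ _)
  have h2 : f ((toDual ℝ H).symm Fc) = F z := by
    rw [hfz, real_inner_comm, ← toDual_apply_apply]
    simp [Fc, Flin]
  rw [hfun, h2]
  exact hF z

/-- Closed balls are compact in the weak topology of a Hilbert space. -/
lemma weak_ball_compact (R : ℝ) :
    IsCompact (toWeakSpace ℝ H '' Metric.closedBall 0 R) := by
  let g : WeakDual ℝ H → WeakSpace ℝ H :=
    fun f => toWeakSpace ℝ H ((toDual ℝ H).symm (WeakDual.toStrongDual f))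
  have hg : Continuous g := by
    apply WeakBilin.continuous_of_continuous_eval
    intro f
    have heq : (fun a : WeakDual ℝ H => (topDualPairing ℝ H).flip (g a) f)
        = fun a : WeakDual ℝ H => a ((toDual ℝ H).symm f) := by
      funext a
      show f ((toDual ℝ H).symm (WeakDual.toStrongDual a)) = a ((toDual ℝ H).symm f)
      calc f ((toDual ℝ H).symm (WeakDual.toStrongDual a))
          = (inner ℝ ((toDual ℝ H).symm f) ((toDual ℝ H).symm (WeakDual.toStrongDual a)) : ℝ) := by
            rw [← toDual_apply_apply]; simp
        _ = (inner ℝ ((toDual ℝ H).symm (WeakDual.toStrongDual a)) ((toDual ℝ H).symm f) : ℝ) :=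
            real_inner_comm _ _
        _ = (WeakDual.toStrongDual a) ((toDual ℝ H).symm f) := by rw [← toDual_apply_apply]; simp
        _ = a ((toDual ℝ H).symm f) := rfl
    rw [heq]
    exact WeakDual.eval_continuous _
  have hcomp := (WeakDual.isCompact_closedBall (0 : StrongDual ℝ H) R).image hg
  have hset : toWeakSpace ℝ H '' Metric.closedBall 0 R
      = g '' (WeakDual.toStrongDual ⁻¹' Metric.closedBall 0 R) := by
    ext w
    constructor
    · rintro ⟨x, hx, rfl⟩
      refine ⟨StrongDual.toWeakDual (toDual ℝ H x), ?_, ?_⟩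
      · simp only [Set.mem_preimage, Metric.mem_closedBall, dist_zero_right]
        rw [Metric.mem_closedBall, dist_zero_right] at hx
        simpa using hx
      · show toWeakSpace ℝ H ((toDual ℝ H).symm (toDual ℝ H x)) = toWeakSpace ℝ H x
        rw [LinearIsometryEquiv.symm_apply_apply]
    · rintro ⟨F, hF, rfl⟩
      refine ⟨(toDual ℝ H).symm (WeakDual.toStrongDual F), ?_, rfl⟩
      simp only [Set.mem_preimage, Metric.mem_closedBall, dist_zero_right] at hF
      rw [Metric.mem_closedBall, dist_zero_right]
      simpa using hF
  rw [hset]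
  exact hcomp

end WeakHelpers

/-- The weak global attractor `Ω* = weak-closure of ⋃ ω_P(D)`:
it is bounded by `R*`, weakly compact, attracts every bounded set in the weak topology,
and is the minimal weakly closed set with this attraction property. -/
theorem weak_global_attractor_properties
    {Ω : Type*} [MeasurableSpace Ω] (ℙ : Measure Ω) [IsProbabilityMeasure ℙ] (d : ℕ)
    (P : Type*) [Nonempty P]
    (Φ : ℝ → L2Space Ω ℙ d → P → L2Space Ω ℙ d)
    (hbdd : ∀ D : Set (L2Space Ω ℙ d), IsBounded D →
      ∃ M : ℝ, ∀ t : ℝ, 0 ≤ t → ∀ x ∈ D, ∀ p : P, ‖Φ t x p‖ ≤ M)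
    (Rstar : ℝ) (hR : 0 < Rstar)
    (habs : ∀ D : Set (L2Space Ω ℙ d), IsBounded D → ∃ T : ℝ, 0 ≤ T ∧
      ∀ t : ℝ, T ≤ t → ∀ x ∈ D, ∀ p : P, ‖Φ t x p‖ ≤ Rstar)
    (ω : Set (L2Space Ω ℙ d) → Set (L2Space Ω ℙ d))
    (hω : ∀ D : Set (L2Space Ω ℙ d),
      ω D = {y : L2Space Ω ℙ d | ∃ ts : ℕ → ℝ, Tendsto ts atTop atTop ∧
        ∃ xs : ℕ → L2Space Ω ℙ d, (∀ n, xs n ∈ D) ∧ ∃ ps : ℕ → P,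
          WeakTendsto (fun n => Φ (ts n) (xs n) (ps n)) y})
    (Ωstar : Set (L2Space Ω ℙ d))
    (hΩ : Ωstar = weakClosure (⋃ D ∈ {D : Set (L2Space Ω ℙ d) | IsBounded D}, ω D)) :
    -- (i) bounded, with norm at most `R*`
    (∀ y ∈ Ωstar, ‖y‖ ≤ Rstar) ∧
    -- (ii) compact in the weak topology
    IsCompact (toWeakSpace ℝ (L2Space Ω ℙ d) '' Ωstar) ∧
    -- (iii) attracts every bounded set in the weak topology
    (∀ D : Set (L2Space Ω ℙ d), IsBounded D →
      ∀ ts : ℕ → ℝ, Tendsto ts atTop atTop →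
      ∀ xs : ℕ → L2Space Ω ℙ d, (∀ n, xs n ∈ D) → ∀ ps : ℕ → P,
      ∃ ψ : ℕ → ℕ, StrictMono ψ ∧ ∃ y ∈ Ωstar,
        WeakTendsto (fun n => Φ (ts (ψ n)) (xs (ψ n)) (ps (ψ n))) y) ∧
    -- (iv) minimality among weakly closed attracting sets
    (∀ C : Set (L2Space Ω ℙ d), IsWeaklyClosed C →
      (∀ D : Set (L2Space Ω ℙ d), IsBounded D →
        ∀ ts : ℕ → ℝ, Tendsto ts atTop atTop →
        ∀ xs : ℕ → L2Space Ω ℙ d, (∀ n, xs n ∈ D) → ∀ ps : ℕ → P,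
        ∃ ψ : ℕ → ℕ, StrictMono ψ ∧ ∃ y ∈ C,
          WeakTendsto (fun n => Φ (ts (ψ n)) (xs (ψ n)) (ps (ψ n))) y) →
      Ωstar ⊆ C) := by
  haveI : T2Space (WeakSpace ℝ (L2Space Ω ℙ d)) := weakSpace_t2
  set S : Set (L2Space Ω ℙ d) := ⋃ D ∈ {D : Set (L2Space Ω ℙ d) | IsBounded D}, ω D with hSdef
  -- every point of S has norm at most Rstar
  have hS : ∀ y ∈ S, ‖y‖ ≤ Rstar := by
    intro y hy
    obtain ⟨D, hD, hyD⟩ := Set.mem_iUnion₂.mp hy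
    rw [hω] at hyD
    obtain ⟨ts, hts, xs, hxs, ps, hwt⟩ := hyD
    obtain ⟨T, hT0, hT⟩ := habs D hD
    refine norm_le_of_weakTendsto hR.le hwt ?_
    filter_upwards [hts.eventually_ge_atTop T] with n hn
    exact hT _ hn _ (hxs n) _
  have hSball : toWeakSpace ℝ (L2Space Ω ℙ d) '' S ⊆ toWeakSpace ℝ (L2Space Ω ℙ d) '' Metric.closedBall 0 Rstar := by
    apply Set.image_mono
    intro y hy
    rw [Metric.mem_closedBall, dist_zero_right]
    exact hS y hy
  have hballcpt : IsCompact (toWeakSpace ℝ (L2Space Ω ℙ d) '' Metric.closedBall 0 Rstar) :=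
    weak_ball_compact Rstar
  have hballcl : IsClosed (toWeakSpace ℝ (L2Space Ω ℙ d) '' Metric.closedBall 0 Rstar) :=
    hballcpt.isClosed
  have hclsub : closure (toWeakSpace ℝ (L2Space Ω ℙ d) '' S) ⊆ toWeakSpace ℝ (L2Space Ω ℙ d) '' Metric.closedBall 0 Rstar :=
    closure_minimal hSball hballcl
  have hSsub : S ⊆ Ωstar := by
    intro y hy
    have h1 : toWeakSpace ℝ (L2Space Ω ℙ d) y ∈
        closure (toWeakSpace ℝ (L2Space Ω ℙ d) '' S) :=
      subset_closure (Set.mem_image_of_mem _ hy)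
    rw [hΩ]
    exact h1
  refine ⟨?_, ?_, ?_, ?_⟩
  · -- (i)
    intro y hy
    rw [hΩ] at hy
    have h1 : toWeakSpace ℝ (L2Space Ω ℙ d) y ∈ toWeakSpace ℝ (L2Space Ω ℙ d) '' Metric.closedBall 0 Rstar := hclsub hy
    obtain ⟨x, hx, hxy⟩ := h1
    have : x = y := (toWeakSpace ℝ (L2Space Ω ℙ d)).injective hxy
    rw [← this]
    rwa [Metric.mem_closedBall, dist_zero_right] at hx
  · -- (ii)
    have himg : toWeakSpace ℝ (L2Space Ω ℙ d) '' Ωstar = closure (toWeakSpace ℝ (L2Space Ω ℙ d) '' S) := by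
      rw [hΩ]
      exact Set.image_preimage_eq _ (toWeakSpace ℝ (L2Space Ω ℙ d)).surjective
    rw [himg]
    exact hballcpt.of_isClosed_subset isClosed_closure hclsub
  · -- (iii)
    intro D hD ts hts xs hxs ps
    obtain ⟨T, hT0, hT⟩ := habs D hD
    obtain ⟨N, hN⟩ := eventually_atTop.mp (hts.eventually_ge_atTop T)
    set w : ℕ → (L2Space Ω ℙ d) := fun n => Φ (ts (n + N)) (xs (n + N)) (ps (n + N)) with hw
    have hwb : ∀ n, ‖w n‖ ≤ Rstar := fun n =>
      hT _ (hN _ (Nat.le_add_left N n)) _ (hxs _) _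
    obtain ⟨φ, hφ, y, hy⟩ := exists_weak_subseq hwb
    have hyω : y ∈ ω D := by
      rw [hω]
      exact ⟨fun n => ts (φ n + N), hts.comp ((tendsto_add_atTop_nat N).comp hφ.tendsto_atTop),
        fun n => xs (φ n + N), fun n => hxs _, fun n => ps (φ n + N), hy⟩
    exact ⟨fun n => φ n + N, fun a b hab => by simpa using Nat.add_lt_add_right (hφ hab) N,
      y, hSsub (Set.mem_biUnion hD hyω), hy⟩
  · -- (iv)
    intro C hC hCat
    have hSC : S ⊆ C := by
      intro z hz
      obtain ⟨D, hD, hzD⟩ := Set.mem_iUnion₂.mp hz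
      rw [hω] at hzD
      obtain ⟨ts, hts, xs, hxs, ps, hzt⟩ := hzD
      obtain ⟨ψ, hψ, c, hcC, hcw⟩ := hCat D hD ts hts xs hxs ps
      have h2 : Tendsto (fun n => toWeakSpace ℝ (L2Space Ω ℙ d) (Φ (ts (ψ n)) (xs (ψ n)) (ps (ψ n))))
          atTop (𝓝 (toWeakSpace ℝ (L2Space Ω ℙ d) z)) := hzt.comp hψ.tendsto_atTop
      have h3 : toWeakSpace ℝ (L2Space Ω ℙ d) c = toWeakSpace ℝ (L2Space Ω ℙ d) z := tendsto_nhds_unique hcw h2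
      have h4 : c = z := (toWeakSpace ℝ (L2Space Ω ℙ d)).injective h3
      rwa [← h4]
    intro y hy
    rw [hΩ] at hy
    have h1 : closure (toWeakSpace ℝ (L2Space Ω ℙ d) '' S) ⊆ toWeakSpace ℝ (L2Space Ω ℙ d) '' C := by
      rw [← hC.closure_eq]
      exact closure_mono (Set.image_mono hSC)
    obtain ⟨c, hcC, hcy⟩ := h1 hy
    rwa [← (toWeakSpace ℝ (L2Space Ω ℙ d)).injective hcy]
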